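/- Let Y, X, Z, W be random variables with E[Z|W] = L(Z|W) (the conditional mean of Z given W is linear in W) and E[(X − L(X|W))(Z − L(Z|W))] ≠ 0. Then the linear IV coefficient β_IV = E[(Y − L(Y|W))(Z − L(Z|W))] / E[(X − L(X|W))(Z − L(Z|W))] equals E[(Y − E[Y|W])(Z − E[Z|W])] / E[(X − E[X|W])(Z − E[Z|W])]. -/

import Mathlib

open MeasureTheory

/-- Population linear projection of `R` onto the random vector `W`:
`L(R|W) = Wᵀ E[WWᵀ]⁻¹ E[WR]`. -/
noncomputable def Lproj {Ω : Type*} [MeasurableSpace Ω] (μ : Measure Ω) (k : ℕ)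
    (W : Ω → Fin k → ℝ) (R : Ω → ℝ) (ω : Ω) : ℝ :=
  ∑ i, (((Matrix.of fun i j => ∫ ω', W ω' i * W ω' j ∂μ : Matrix (Fin k) (Fin k) ℝ))⁻¹.mulVec
      (fun i => ∫ ω', W ω' i * R ω' ∂μ)) i * W ω i

/-- Conditional expectation of `R` given the σ-algebra generated by the random vector `W`. -/
noncomputable def condExpW {Ω : Type*} [inst : MeasurableSpace Ω] (μ : Measure Ω) (k : ℕ)
    (W : Ω → Fin k → ℝ) (R : Ω → ℝ) : Ω → ℝ :=
  MeasureTheory.condExp (m₀ := inst) (MeasurableSpace.comap W inferInstance) μ R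

/-
The linear-projection residual `X - L(X|W)` differs from `X - E[X|W]` by a function of `W`,
and every square-integrable function of `W` is orthogonal to `Z - E[Z|W]`. Hence once
`L(Z|W) = E[Z|W]`, numerator and denominator of the linear IV coefficient coincide with those of
the conditional one.
-/

section Orthogonality

variable {Ω : Type*} {m m₀ : MeasurableSpace Ω} {μ : Measure Ω}

theorem integral_mul_sub_condExp_eq_zero [IsFiniteMeasure μ] (hm : m ≤ m₀) {g f : Ω → ℝ}
    (hg_meas : StronglyMeasurable[m] g) (hg : MemLp g 2 μ) (hf : MemLp f 2 μ) :
    ∫ ω, g ω * (f ω - μ[f|m] ω) ∂μ = 0 := by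
  have hgf : Integrable (g * f) μ := hg.integrable_mul hf
  have hg_condExp : Integrable (g * μ[f|m]) μ := hg.integrable_mul (hf.condExp one_le_two)
  have pull_out : μ[g * f|m] =ᵐ[μ] g * μ[f|m] :=
    condExp_mul_of_stronglyMeasurable_left hg_meas hgf (hf.integrable one_le_two)
  calc ∫ ω, g ω * (f ω - μ[f|m] ω) ∂μ
      = ∫ ω, (g * f) ω ∂μ - ∫ ω, (g * μ[f|m]) ω ∂μ := by
        rw [← integral_sub hgf hg_condExp]
        simp only [Pi.mul_apply, mul_sub]
    _ = ∫ ω, (g * f) ω ∂μ - ∫ ω, μ[g * f|m] ω ∂μ := by rw [integral_congr_ae pull_out]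
    _ = 0 := by rw [integral_condExp hm, sub_self]

theorem integral_sub_mul_sub_eq_of_condExp_ae_eq [IsFiniteMeasure μ] (hm : m ≤ m₀)
    {f Z Lf LZ : Ω → ℝ} (hf : MemLp f 2 μ) (hZ : MemLp Z 2 μ)
    (hLf_meas : StronglyMeasurable[m] Lf) (hLf : MemLp Lf 2 μ) (hLZ : μ[Z|m] =ᵐ[μ] LZ) :
    ∫ ω, (f ω - Lf ω) * (Z ω - LZ ω) ∂μ = ∫ ω, (f ω - μ[f|m] ω) * (Z ω - μ[Z|m] ω) ∂μ := by
  have hf_condExp : MemLp (μ[f|m]) 2 μ := hf.condExp one_le_two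
  have hZ_resid : MemLp (Z - μ[Z|m]) 2 μ := hZ.sub (hZ.condExp one_le_two)
  have orth : ∫ ω, (μ[f|m] ω - Lf ω) * (Z ω - μ[Z|m] ω) ∂μ = 0 :=
    integral_mul_sub_condExp_eq_zero hm (stronglyMeasurable_condExp.sub hLf_meas)
      (hf_condExp.sub hLf) hZ
  calc ∫ ω, (f ω - Lf ω) * (Z ω - LZ ω) ∂μ
      = ∫ ω, ((f ω - μ[f|m] ω) * (Z ω - μ[Z|m] ω)
          + (μ[f|m] ω - Lf ω) * (Z ω - μ[Z|m] ω)) ∂μ := by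
        refine integral_congr_ae ?_
        filter_upwards [hLZ] with ω hω
        rw [← hω]
        ring
    _ = ∫ ω, (f ω - μ[f|m] ω) * (Z ω - μ[Z|m] ω) ∂μ := by
        have hcov : Integrable (fun ω => (f ω - μ[f|m] ω) * (Z ω - μ[Z|m] ω)) μ :=
          (hf.sub hf_condExp).integrable_mul hZ_resid
        have hcross : Integrable (fun ω => (μ[f|m] ω - Lf ω) * (Z ω - μ[Z|m] ω)) μ :=
          (hf_condExp.sub hLf).integrable_mul hZ_resid
        rw [integral_add hcov hcross, orth, add_zero]

end Orthogonality

section LinearProjection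

variable {Ω : Type*} [MeasurableSpace Ω] (μ : Measure Ω) {k : ℕ} (W : Ω → Fin k → ℝ)

theorem stronglyMeasurable_comap_Lproj (R : Ω → ℝ) :
    StronglyMeasurable[MeasurableSpace.comap W inferInstance] (Lproj μ k W R) :=
  (Finset.measurable_sum _ fun i _ =>
    measurable_const.mul ((measurable_pi_apply i).comp (comap_measurable W))).stronglyMeasurable

theorem memLp_Lproj {p : ENNReal} (hW : ∀ i, MemLp (fun ω => W ω i) p μ) (R : Ω → ℝ) :
    MemLp (Lproj μ k W R) p μ :=
  memLp_finsetSum _ fun i _ => (hW i).const_mul _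

end LinearProjection

theorem stmt_10_general {Ω : Type*} [MeasurableSpace Ω] (μ : Measure Ω) [IsProbabilityMeasure μ]
    {k : ℕ} (W : Ω → Fin k → ℝ) (Y X Z : Ω → ℝ)
    (hW : Measurable W)
    (hY : MeasureTheory.MemLp Y 2 μ) (hX : MeasureTheory.MemLp X 2 μ)
    (hZ : MeasureTheory.MemLp Z 2 μ)
    (hWi : ∀ i, MeasureTheory.MemLp (fun ω => W ω i) 2 μ)
    (hlin : ∀ᵐ ω ∂μ, condExpW μ k W Z ω = Lproj μ k W Z ω) :
    (∫ ω, (Y ω - Lproj μ k W Y ω) * (Z ω - Lproj μ k W Z ω) ∂μ) /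
        (∫ ω, (X ω - Lproj μ k W X ω) * (Z ω - Lproj μ k W Z ω) ∂μ) =
      (∫ ω, (Y ω - condExpW μ k W Y ω) * (Z ω - condExpW μ k W Z ω) ∂μ) /
        (∫ ω, (X ω - condExpW μ k W X ω) * (Z ω - condExpW μ k W Z ω) ∂μ) := by
  have hm := hW.comap_le
  have residual_cov (f : Ω → ℝ) (hf : MemLp f 2 μ) :=
    integral_sub_mul_sub_eq_of_condExp_ae_eq hm hf hZ (stronglyMeasurable_comap_Lproj μ W f)
      (memLp_Lproj μ W hWi f) hlin
  rw [residual_cov Y hY, residual_cov X hX]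
  rfl

theorem stmt_10 {Ω : Type*} [MeasurableSpace Ω] (μ : Measure Ω) [IsProbabilityMeasure μ]
    {k : ℕ} (W : Ω → Fin k → ℝ) (Y X Z : Ω → ℝ)
    (hW : Measurable W)
    (hY : MeasureTheory.MemLp Y 2 μ) (hX : MeasureTheory.MemLp X 2 μ)
    (hZ : MeasureTheory.MemLp Z 2 μ)
    (hWi : ∀ i, MeasureTheory.MemLp (fun ω => W ω i) 2 μ)
    (hinv : IsUnit ((Matrix.of fun i j => ∫ ω, W ω i * W ω j ∂μ : Matrix (Fin k) (Fin k) ℝ)))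
    (hlin : ∀ᵐ ω ∂μ, condExpW μ k W Z ω = Lproj μ k W Z ω)
    (hden : (∫ ω, (X ω - Lproj μ k W X ω) * (Z ω - Lproj μ k W Z ω) ∂μ) ≠ 0) :
    (∫ ω, (Y ω - Lproj μ k W Y ω) * (Z ω - Lproj μ k W Z ω) ∂μ) /
        (∫ ω, (X ω - Lproj μ k W X ω) * (Z ω - Lproj μ k W Z ω) ∂μ) =
      (∫ ω, (Y ω - condExpW μ k W Y ω) * (Z ω - condExpW μ k W Z ω) ∂μ) /
        (∫ ω, (X ω - condExpW μ k W X ω) * (Z ω - condExpW μ k W Z ω) ∂μ) :=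
  stmt_10_general μ W Y X Z hW hY hX hZ hWi hlin
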